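/- arXiv:2003.00569 — 3 statements merged into one kernel-verified Lean document; each statement's English description precedes it below -/
import Mathlib

section
/- Let σ be a subgroup of ℤ and let ξ_{c₁,c₂} ⊆ ℤ for c₁,c₂ ∈ {∘,•} satisfy: (ii) ξ_{c₁,c₂} + σ ⊆ ξ_{c₁,c₂}, (iii) ξ_{c₁,c₂} ⊆ −ξ_{c̄₂,c̄₁}, (iv) ξ_{c₁,c₂} ⊆ −ξ_{c₂,c₁} + σ, and (v) ξ_{c₁,c₂} ⊆ ξ_{c₁,c̄₂} ∪ (−ξ_{c₂,c̄₁} + σ), for all c₁,c₂ ∈ {∘,•}. Then ξ_{∘∘} = ξ_{∘•} (and hence all four sets ξ_{∘∘}, ξ_{••}, ξ_{∘•}, ξ_{•∘} coincide). -/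
open Pointwise

theorem stmt2 (σ : AddSubgroup ℤ) (ξ : Bool → Bool → Set ℤ)
    (h2 : ∀ c1 c2, ξ c1 c2 + (σ : Set ℤ) ⊆ ξ c1 c2)
    (h3 : ∀ c1 c2, ξ c1 c2 ⊆ -(ξ (!c2) (!c1)))
    (h4 : ∀ c1 c2, ξ c1 c2 ⊆ -(ξ c2 c1) + (σ : Set ℤ))
    (h5 : ∀ c1 c2, ξ c1 c2 ⊆ ξ c1 (!c2) ∪ (-(ξ c2 (!c1)) + (σ : Set ℤ))) :
    ξ true true = ξ true false ∧ ξ true true = ξ false false ∧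
      ξ true false = ξ false true := by
  -- (iv'): x ∈ ξ c1 c2 → -x ∈ ξ c2 c1
  have iv' : ∀ c1 c2 x, x ∈ ξ c1 c2 → -x ∈ ξ c2 c1 := by
    intro c1 c2 x hx
    obtain ⟨y, hy, s, hs, rfl⟩ := h4 c1 c2 hx
    have hny : -y ∈ ξ c2 c1 := by rwa [Set.mem_neg] at hy
    have : -y + (-s) ∈ ξ c2 c1 := h2 c2 c1 ⟨-y, hny, -s, neg_mem hs, rfl⟩
    simpa [neg_add, add_comm] using this
  -- (iii'): x ∈ ξ c1 c2 → -x ∈ ξ (!c2) (!c1)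
  have iii' : ∀ c1 c2 x, x ∈ ξ c1 c2 → -x ∈ ξ (!c2) (!c1) := by
    intro c1 c2 x hx
    have := h3 c1 c2 hx
    rwa [Set.mem_neg] at this
  -- swap both colors
  have swap : ∀ a b, ξ a b = ξ (!a) (!b) := by
    intro a b
    ext x
    constructor
    · intro hx
      have := iii' b a _ (iv' a b x hx)
      simpa using this
    · intro hx
      have := iii' (!b) (!a) _ (iv' (!a) (!b) x hx)
      simpa using this
  have hσ : ∀ c1 c2 x s, x ∈ ξ c1 c2 → s ∈ σ → x + s ∈ ξ c1 c2 := by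
    intro c1 c2 x s hx hs
    exact h2 c1 c2 ⟨x, hx, s, hs, rfl⟩
  have e1 : ξ true true = ξ true false := by
    apply Set.Subset.antisymm
    · intro x hx
      rcases h5 true true hx with h | ⟨y, hy, s, hs, rfl⟩
      · exact h
      · rw [Set.mem_neg] at hy
        have : y ∈ ξ false true := by simpa using iv' true false (-y) hy
        have hy' : y ∈ ξ true false := by rw [swap false true] at this; simpa using this
        exact hσ _ _ _ _ hy' hs
    · intro x hx
      rcases h5 true false hx with h | ⟨y, hy, s, hs, rfl⟩
      · exact h
      · rw [Set.mem_neg] at hy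
        have : y ∈ ξ false false := by simpa using iv' false false (-y) hy
        have hy' : y ∈ ξ true true := by rw [swap true true]; simpa using this
        exact hσ _ _ _ _ hy' hs
  refine ⟨e1, by simpa using swap true true, by simpa using swap true false⟩
end

section
/- Let κ, λ ⊆ ℤ with λ = −λ, 0 ∈ κ, κ = −κ, κ + κ ⊆ κ, κ + λ ⊆ λ, and λ + λ ⊆ κ. Then either λ = ∅ and κ = dℤ for some d ∈ ℕ ∪ {0}, or there exists l ∈ ℕ ∪ {0} such that (λ, κ) = (l + 2lℤ, 2lℤ) or (λ, κ) = (lℤ, lℤ). -/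
open Pointwise

/-- The set of integer multiples of `m`. -/
def zMul (m : ℤ) : Set ℤ := {x | ∃ n : ℤ, x = m * n}

/-- The coset `l + mℤ`. -/
def zCoset (l m : ℤ) : Set ℤ := {x | ∃ n : ℤ, x = l + m * n}

theorem stmt6 (κ lam : Set ℤ)
    (hneg : lam = -lam) (h0 : (0 : ℤ) ∈ κ) (hκneg : κ = -κ)
    (hκκ : κ + κ ⊆ κ) (hkl : κ + lam ⊆ lam) (hll : lam + lam ⊆ κ) :
    (lam = ∅ ∧ ∃ d : ℤ, 0 ≤ d ∧ κ = zMul d) ∨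
      (∃ l : ℤ, 0 ≤ l ∧
        ((lam = zCoset l (2 * l) ∧ κ = zMul (2 * l)) ∨
          (lam = zMul l ∧ κ = zMul l))) := by
  have hneg' : ∀ x ∈ κ, -x ∈ κ := by
    intro x hx
    rw [hκneg] at hx
    simpa using hx
  have hlneg : ∀ x ∈ lam, -x ∈ lam := by
    intro x hx
    rw [hneg] at hx
    simpa using hx
  let K : AddSubgroup ℤ :=
    { carrier := κ
      add_mem' := fun hx hy => hκκ (Set.add_mem_add hx hy)
      zero_mem' := h0
      neg_mem' := fun hx => hneg' _ hx }
  obtain ⟨d0, hd0⟩ := Int.subgroup_cyclic K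
  have hκmem : ∀ x : ℤ, x ∈ κ ↔ d0 ∣ x := by
    intro x
    have : x ∈ K ↔ x ∈ AddSubgroup.closure {d0} := by rw [← hd0]
    rw [AddSubgroup.mem_closure_singleton] at this
    constructor
    · intro hx
      obtain ⟨n, hn⟩ := this.mp hx
      exact ⟨n, by rw [← hn, smul_eq_mul]; ring⟩
    · intro ⟨n, hn⟩
      exact this.mpr ⟨n, by rw [hn, smul_eq_mul]; ring⟩
  set d := |d0| with hdd
  have hd : 0 ≤ d := abs_nonneg d0
  have hκmem' : ∀ x : ℤ, x ∈ κ ↔ d ∣ x := by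
    intro x; rw [hκmem, hdd, abs_dvd]
  have hκd : κ = zMul d := by
    ext x
    rw [hκmem' x]
    exact ⟨fun ⟨n, hn⟩ => ⟨n, hn⟩, fun ⟨n, hn⟩ => ⟨n, hn⟩⟩
  rcases Set.eq_empty_or_nonempty lam with he | ⟨a, ha⟩
  · exact Or.inl ⟨he, d, hd, hκd⟩
  · right
    have hsub : ∀ b ∈ lam, d ∣ b - a := by
      intro b hb
      have : b + -a ∈ κ := hll (Set.add_mem_add hb (hlneg a ha))
      rw [hκmem'] at this
      simpa [sub_eq_add_neg] using this
    have hsup : ∀ c : ℤ, d ∣ c → c + a ∈ lam := by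
      intro c hc
      exact hkl (Set.add_mem_add ((hκmem' c).mpr hc) ha)
    have hlammem : ∀ x : ℤ, x ∈ lam ↔ d ∣ x - a := by
      intro x
      constructor
      · exact hsub x
      · intro hx
        have := hsup (x - a) hx
        simpa using this
    have h2a : d ∣ 2 * a := by
      have : a + a ∈ κ := hll (Set.add_mem_add ha ha)
      rw [hκmem'] at this
      convert this using 1; ring
    by_cases hda : d ∣ a
    · refine ⟨d, hd, Or.inr ⟨?_, hκd⟩⟩
      ext x
      rw [hlammem x]
      constructor
      · intro hx
        have hx' : d ∣ x := by simpa using dvd_add hx hda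
        obtain ⟨n, hn⟩ := hx'
        exact ⟨n, hn⟩
      · intro ⟨n, hn⟩
        exact dvd_sub ⟨n, hn⟩ hda
    · have hd0ne : d ≠ 0 := by
        intro h
        apply hda
        rw [h] at h2a ⊢
        have : 2 * a = 0 := by simpa using h2a
        have : a = 0 := by linarith
        simp [this]
      obtain ⟨k, hk⟩ := h2a
      rcases Int.even_or_odd k with ⟨m, hm⟩ | ⟨m, hm⟩
      · exfalso
        apply hda
        refine ⟨m, ?_⟩
        have : 2 * a = 2 * (d * m) := by rw [hk, hm]; ring
        linarith
      · -- k = 2m+1, so d = 2*(a - d*m)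
        set l := a - d * m with hl
        have hdl : d = 2 * l := by
          have : 2 * a = 2 * (d * m) + d := by rw [hk, hm]; ring
          rw [hl]; linarith
        have hlnn : 0 ≤ l := by linarith [hd, hdl]
        have hal : a = l + 2 * l * m := by rw [hl, ← hdl]; ring
        refine ⟨l, hlnn, Or.inl ⟨?_, by rw [← hdl]; exact hκd⟩⟩
        ext x
        rw [hlammem x]
        constructor
        · intro ⟨n, hn⟩
          exact ⟨m + n, by rw [← hdl]; have : x = a + d * n := by linarith
                           rw [this, hal, hdl]; ring⟩
        · intro ⟨n, hn⟩
          refine ⟨n - m, ?_⟩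
          rw [hn, hal, hdl]; ring
end

section
/- Let σ be a subgroup of ℤ and let κ_{c₁,c₂}, ξ_{c₁,c₂} ⊆ ℤ for c₁,c₂ ∈ {∘,•} satisfy all of the following for all c₁,c₂,c₃ ∈ {∘,•} and ω ∈ {κ, ξ}: (ii) ω_{c₁,c₂} + σ ⊆ ω_{c₁,c₂}; (iii) ω_{c₁,c₂} ⊆ −ω_{c̄₂,c̄₁}; (iv) ω_{c₁,c₂} ⊆ −ω_{c₂,c₁} + σ; (v) ξ_{c₁,c₂} ⊆ ξ_{c₁,c̄₂} ∪ (−ξ_{c₂,c̄₁} + σ); (vi) 0 ∈ κ_{∘•} ∩ κ_{•∘}; (vii) κ_{c₁,c₂} + κ_{c̄₂,c₃} ⊆ κ_{c₁,c₃}; (viii) κ_{c₁,c₂} + ξ_{c̄₂,c₃} ⊆ ξ_{c₁,c₃}. Then κ_{∘∘} = κ_{••} =: λ, κ_{∘•} = κ_{•∘} =: κ, ξ_{∘∘} = ξ_{••} = ξ_{∘•} = ξ_{•∘} =: ξ, and there exist u ∈ ℕ ∪ {0}, m ∈ ℕ, D ⊆ {0} ∪ {1,…,⌊m/2⌋}, and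 E ⊆ {0} ∪ ℕ such that (σ, λ, κ, ξ) equals one of: (umℤ, mℤ, mℤ, ℤ\D_m), (2umℤ, m+2mℤ, 2mℤ, ℤ\D_m), (umℤ, ∅, mℤ, ℤ\D_m), ({0}, {0}, {0}, ℤ\E₀), ({0}, ∅, {0}, ℤ\E₀). -/
open Pointwise

/-- `D_m = (D ∪ (m - D)) + mℤ`. -/
def dmSet (m : ℤ) (D : Set ℤ) : Set ℤ :=
  {x | ∃ a ∈ D ∪ (fun s => m - s) '' D, ∃ n : ℤ, x = a + m * n}

/-!
Conditions (iii) and (iv) make every family `ω` symmetric under `(c₁, c₂) ↦ (c̄₁, c̄₂)` and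
`(c₁, c₂) ↦ (c₂, c₁)` and closed under negation, and (v) then identifies all four `ξ`s. By (vii),
`κ = κ_{∘•}` is a subgroup `mℤ` of `ℤ` containing `σ`, while `λ = κ_{∘∘}` satisfies `κ + λ ⊆ λ`
and `λ + λ ⊆ κ`: it is empty or a coset `l + κ` with `2l ∈ κ`, i.e. `κ` itself or `m/2 + mℤ`.
By (viii) the complement of `ξ` is symmetric and invariant under translation by `κ ∪ λ`, hence
it is determined by its intersection with a fundamental domain `[0, m/2]` of the reflections
`x ↦ -x`, `x ↦ m - x`.
-/

lemma mem_zMul {m x : ℤ} : x ∈ zMul m ↔ m ∣ x := Iff.rfl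

lemma mem_zCoset {l m x : ℤ} : x ∈ zCoset l m ↔ m ∣ x - l :=
  ⟨fun ⟨n, hn⟩ => ⟨n, by rw [hn]; ring⟩, fun ⟨n, hn⟩ => ⟨n, by linarith⟩⟩

lemma zMul_zero : zMul 0 = {0} := by
  ext x
  simp [mem_zMul]

lemma neg_zMul_subset (m : ℤ) : -zMul m ⊆ zMul m := fun _ hx => dvd_neg.mp hx

lemma zMul_subset_zMul_two_mul_union_zCoset (r : ℤ) : zMul r ⊆ zMul (2 * r) ∪ zCoset r (2 * r) := by
  rintro _ ⟨n, rfl⟩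
  rcases Int.even_or_odd' n with ⟨j, rfl | rfl⟩
  · exact Or.inl ⟨j, by ring⟩
  · exact Or.inr ⟨j, by ring⟩

lemma exists_nonneg_coe_eq_zMul (H : AddSubgroup ℤ) : ∃ m, 0 ≤ m ∧ (H : Set ℤ) = zMul m := by
  obtain ⟨a, rfl⟩ := Int.subgroup_cyclic H
  refine ⟨a.natAbs, by positivity, Set.ext fun x => ?_⟩
  simp [mem_zMul, ← AddSubgroup.zmultiples_eq_closure, Int.mem_zmultiples_iff]

section Pointwise

variable {G : Type*} [AddGroup G]

lemma neg_compl_subset_compl {X : Set G} (hX : -X ⊆ X) : -Xᶜ ⊆ Xᶜ :=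
  fun _ hx hxX => hx (hX (Set.neg_mem_neg.mpr hxX))

lemma add_compl_subset_compl {S X : Set G} (hS : -S ⊆ S) (hX : S + X ⊆ X) : S + Xᶜ ⊆ Xᶜ := by
  rintro _ ⟨s, hs, x, hx, rfl⟩ hsx
  exact hx (by simpa using hX (Set.add_mem_add (hS (Set.neg_mem_neg.mpr hs)) hsx))

end Pointwise

/-- Conditions (ii)–(iv), with `true` for `∘` and `!` for `c ↦ c̄`. -/
structure SymmetricFamily {G : Type*} [AddGroup G] (σ : Set G) (ω : Bool → Bool → Set G) :
    Prop where
  add_subset : ∀ c₁ c₂, ω c₁ c₂ + σ ⊆ ω c₁ c₂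
  subset_neg : ∀ c₁ c₂, ω c₁ c₂ ⊆ -ω (!c₂) (!c₁)
  subset_neg_add : ∀ c₁ c₂, ω c₁ c₂ ⊆ -ω c₂ c₁ + σ

namespace SymmetricFamily

variable {G : Type*} [AddGroup G] {σ : Set G} {ω : Bool → Bool → Set G}

lemma subset_not_not (h : SymmetricFamily σ ω) (c₁ c₂ : Bool) : ω c₁ c₂ ⊆ ω (!c₁) (!c₂) :=
  (h.subset_neg_add c₁ c₂).trans <|
    (Set.add_subset_add_right (Set.neg_subset.mpr (h.subset_neg c₂ c₁))).trans (h.add_subset _ _)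

lemma not_not_eq (h : SymmetricFamily σ ω) (c₁ c₂ : Bool) : ω (!c₁) (!c₂) = ω c₁ c₂ :=
  Set.Subset.antisymm (by simpa using h.subset_not_not (!c₁) (!c₂)) (h.subset_not_not c₁ c₂)

lemma not_swap_eq (h : SymmetricFamily σ ω) (c₁ c₂ : Bool) : ω (!c₂) (!c₁) = ω c₁ c₂ := by
  cases c₁ <;> cases c₂ <;> first | rfl | exact h.not_not_eq _ _

lemma swap_eq (h : SymmetricFamily σ ω) (c₁ c₂ : Bool) : ω c₂ c₁ = ω c₁ c₂ :=
  (h.not_not_eq c₂ c₁).symm.trans (h.not_swap_eq c₁ c₂)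

lemma neg_subset (h : SymmetricFamily σ ω) (c₁ c₂ : Bool) : -ω c₁ c₂ ⊆ ω c₁ c₂ :=
  Set.neg_subset.mpr (h.not_swap_eq c₁ c₂ ▸ h.subset_neg c₁ c₂)

lemma not_right_eq (h : SymmetricFamily σ ω)
    (hunion : ∀ c₁ c₂, ω c₁ c₂ ⊆ ω c₁ (!c₂) ∪ (-ω c₂ (!c₁) + σ)) (c₁ c₂ : Bool) :
    ω c₁ (!c₂) = ω c₁ c₂ := by
  have hsub : ∀ c₁ c₂, ω c₁ c₂ ⊆ ω c₁ (!c₂) := fun c₁ c₂ => by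
    have hflip : ω c₂ (!c₁) = ω c₁ (!c₂) := by simpa using h.not_swap_eq c₁ (!c₂)
    refine (hunion c₁ c₂).trans (Set.union_subset subset_rfl ?_)
    rw [hflip]
    exact (Set.add_subset_add_right (h.neg_subset _ _)).trans (h.add_subset _ _)
  exact Set.Subset.antisymm (by simpa using hsub c₁ (!c₂)) (hsub c₁ c₂)

end SymmetricFamily

lemma dvd_or_exists_of_dvd_two_mul {M l : ℤ} (hM : 0 ≤ M) (h : M ∣ 2 * l) :
    M ∣ l ∨ ∃ r, 0 < r ∧ M = 2 * r ∧ 2 * r ∣ l - r := by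
  obtain ⟨k, hk⟩ := h
  rcases Int.even_or_odd' k with ⟨j, rfl | rfl⟩
  · exact Or.inl ⟨j, by linarith⟩
  rcases (show 0 ≤ l - M * j by linarith).eq_or_lt with h0 | hpos
  · exact Or.inl ⟨j, by linarith⟩
  · exact Or.inr ⟨l - M * j, hpos, by linarith, j, by linear_combination (-j) * hk⟩

lemma eq_empty_or_eq_zMul_or_eq_zCoset {M : ℤ} (hM : 0 ≤ M) {L : Set ℤ}
    (hKL : zMul M + L ⊆ L) (hLL : L + L ⊆ zMul M) :
    L = ∅ ∨ L = zMul M ∨ ∃ r, 0 < r ∧ M = 2 * r ∧ L = zCoset r (2 * r) := by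
  rcases L.eq_empty_or_nonempty with hL | ⟨l, hl⟩
  · exact Or.inl hL
  have h2l : M ∣ l + l := hLL (Set.add_mem_add hl hl)
  have hneg : -l ∈ L := by
    convert hKL (Set.add_mem_add (neg_zMul_subset M (Set.neg_mem_neg.mpr h2l)) hl) using 1
    ring
  have hmem : ∀ x, x ∈ L ↔ M ∣ x - l := fun x =>
    ⟨fun hx => sub_eq_add_neg x l ▸ hLL (Set.add_mem_add hx hneg),
      fun hx => by simpa using hKL (Set.add_mem_add hx hl)⟩
  rcases dvd_or_exists_of_dvd_two_mul hM (two_mul l ▸ h2l) with hlM | ⟨r, hr, rfl, hlr⟩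
  · exact Or.inr (Or.inl (Set.ext fun x => (hmem x).trans (dvd_sub_left hlM)))
  · refine Or.inr (Or.inr ⟨r, hr, rfl, Set.ext fun x => (hmem x).trans ?_⟩)
    rw [mem_zCoset, ← dvd_sub_left hlr (b := x - r), sub_sub_sub_cancel_right]

lemma exists_dmSet_eq {m : ℤ} (hm : 1 ≤ m) {C : Set ℤ} (hC : zMul m + C ⊆ C) (hneg : -C ⊆ C) :
    ∃ D ⊆ {0} ∪ Set.Icc 1 (m / 2), dmSet m D = C := by
  have hper : ∀ {c} n, c ∈ C → c + m * n ∈ C := fun n hc =>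
    add_comm (m * n) _ ▸ hC (Set.add_mem_add ⟨n, rfl⟩ hc)
  refine ⟨C ∩ Set.Icc 0 (m / 2), fun x ⟨_, h0, hx⟩ => h0.eq_or_lt.imp Eq.symm (⟨·, hx⟩),
    Set.ext fun x => ⟨?_, fun hx => ?_⟩⟩
  · rintro ⟨a, ⟨ha, -⟩ | ⟨d, ⟨hd, -⟩, rfl⟩, n, rfl⟩
    · exact hper n ha
    · convert hper (n + 1) (hneg (Set.neg_mem_neg.mpr hd)) using 1
      ring
  · have hr : x % m ∈ C := by
      convert hper (-(x / m)) hx using 1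
      rw [Int.emod_def]
      ring
    have hx_eq : x = x % m + m * (x / m) := (Int.emod_add_mul_ediv x m).symm
    have h0 := Int.emod_nonneg x (show m ≠ 0 by omega)
    have hlt := Int.emod_lt_of_pos x (show 0 < m by omega)
    by_cases hhalf : x % m ≤ m / 2
    · exact ⟨x % m, Or.inl ⟨hr, h0, hhalf⟩, x / m, hx_eq⟩
    · refine ⟨m - (m - x % m), Or.inr ⟨m - x % m, ⟨?_, by omega, by omega⟩, rfl⟩, x / m, ?_⟩
      · convert hper 1 (hneg (Set.neg_mem_neg.mpr hr)) using 1
        ring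
      · rwa [sub_sub_cancel]

lemma exists_union_neg_eq {C : Set ℤ} (hneg : -C ⊆ C) :
    ∃ E ⊆ {0} ∪ {x : ℤ | 0 < x}, E ∪ -E = C := by
  refine ⟨C ∩ {x | 0 ≤ x}, fun x ⟨_, (hx : 0 ≤ x)⟩ => hx.eq_or_lt.imp Eq.symm id,
    Set.ext fun x => ⟨?_, fun hx => ?_⟩⟩
  · rintro (⟨hx, -⟩ | ⟨hx, -⟩)
    · exact hx
    · simpa using hneg (Set.neg_mem_neg.mpr hx)
  · rcases le_total 0 x with h | h
    · exact Or.inl ⟨hx, h⟩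
    · exact Or.inr ⟨hneg (Set.neg_mem_neg.mpr hx), neg_nonneg.mpr h⟩

lemma exists_eq_compl_dmSet {m : ℤ} (hm : 1 ≤ m) {X : Set ℤ} (hX : zMul m + X ⊆ X)
    (hneg : -X ⊆ X) : ∃ D ⊆ {0} ∪ Set.Icc 1 (m / 2), X = (dmSet m D)ᶜ := by
  obtain ⟨D, hD, hDX⟩ := exists_dmSet_eq hm
    (add_compl_subset_compl (neg_zMul_subset m) hX) (neg_compl_subset_compl hneg)
  exact ⟨D, hD, by rw [hDX, compl_compl]⟩

lemma exists_eq_compl_union_neg {X : Set ℤ} (hneg : -X ⊆ X) :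
    ∃ E ⊆ {0} ∪ {x : ℤ | 0 < x}, X = (E ∪ -E)ᶜ := by
  obtain ⟨E, hE, hEX⟩ := exists_union_neg_eq (neg_compl_subset_compl hneg)
  exact ⟨E, hE, by rw [hEX, compl_compl]⟩

lemma exists_normal_form (σ K : AddSubgroup ℤ) (L X : Set ℤ) (hσK : σ ≤ K)
    (hKL : (K : Set ℤ) + L ⊆ L) (hLL : L + L ⊆ K)
    (hKX : (K : Set ℤ) + X ⊆ X) (hLX : L + X ⊆ X) (hXneg : -X ⊆ X) :
    ∃ u m : ℤ, 0 ≤ u ∧ 1 ≤ m ∧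
      ∃ D E : Set ℤ, D ⊆ {0} ∪ Set.Icc 1 (m / 2) ∧ E ⊆ {0} ∪ {x : ℤ | 0 < x} ∧
        (((σ : Set ℤ) = zMul (u * m) ∧ L = zMul m ∧ (K : Set ℤ) = zMul m ∧ X = (dmSet m D)ᶜ) ∨
         ((σ : Set ℤ) = zMul (2 * u * m) ∧ L = zCoset m (2 * m) ∧
            (K : Set ℤ) = zMul (2 * m) ∧ X = (dmSet m D)ᶜ) ∨
         ((σ : Set ℤ) = zMul (u * m) ∧ L = ∅ ∧ (K : Set ℤ) = zMul m ∧ X = (dmSet m D)ᶜ) ∨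
         ((σ : Set ℤ) = {0} ∧ L = {0} ∧ (K : Set ℤ) = {0} ∧ X = (E ∪ -E)ᶜ) ∨
         ((σ : Set ℤ) = {0} ∧ L = ∅ ∧ (K : Set ℤ) = {0} ∧ X = (E ∪ -E)ᶜ)) := by
  obtain ⟨M, hM, hK⟩ := exists_nonneg_coe_eq_zMul K
  obtain ⟨s, hs, hσ⟩ := exists_nonneg_coe_eq_zMul σ
  have hMs : M ∣ s := by
    rw [← mem_zMul, ← hK]
    exact hσK (show s ∈ (σ : Set ℤ) by rw [hσ]; exact dvd_rfl)
  rw [hK] at hKL hLL hKX ⊢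
  rw [hσ]
  rcases hM.eq_or_lt with rfl | hMpos
  · obtain rfl : s = 0 := zero_dvd_iff.mp hMs
    obtain ⟨E, hE, hXE⟩ := exists_eq_compl_union_neg hXneg
    rcases eq_empty_or_eq_zMul_or_eq_zCoset le_rfl hKL hLL with hL | hL | ⟨r, hr, h0, -⟩
    · exact ⟨0, 1, le_rfl, le_rfl, ∅, E, Set.empty_subset _, hE, by simp [hL, hXE, zMul_zero]⟩
    · exact ⟨0, 1, le_rfl, le_rfl, ∅, E, Set.empty_subset _, hE, by simp [hL, hXE, zMul_zero]⟩
    · omega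
  obtain ⟨u, rfl⟩ := hMs
  have hu : 0 ≤ u := nonneg_of_mul_nonneg_right hs hMpos
  rcases eq_empty_or_eq_zMul_or_eq_zCoset hM hKL hLL with hL | hL | ⟨r, hr, rfl, hL⟩
  · obtain ⟨D, hD, hXD⟩ := exists_eq_compl_dmSet hMpos hKX hXneg
    exact ⟨u, M, hu, hMpos, D, ∅, hD, Set.empty_subset _,
      Or.inr <| Or.inr <| Or.inl ⟨by rw [mul_comm], hL, rfl, hXD⟩⟩
  · obtain ⟨D, hD, hXD⟩ := exists_eq_compl_dmSet hMpos hKX hXneg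
    exact ⟨u, M, hu, hMpos, D, ∅, hD, Set.empty_subset _, Or.inl ⟨by rw [mul_comm], hL, rfl, hXD⟩⟩
  · have hrX : zMul r + X ⊆ X := by
      refine (Set.add_subset_add_right (zMul_subset_zMul_two_mul_union_zCoset r)).trans ?_
      rw [Set.union_add, ← hL]
      exact Set.union_subset hKX hLX
    obtain ⟨D, hD, hXD⟩ := exists_eq_compl_dmSet hr hrX hXneg
    exact ⟨u, r, hu, hr, D, ∅, hD, Set.empty_subset _,
      Or.inr <| Or.inl ⟨by rw [mul_right_comm], hL, rfl, hXD⟩⟩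

theorem stmt15 (σ : AddSubgroup ℤ) (κ ξ : Bool → Bool → Set ℤ)
    (hκ2 : ∀ c1 c2, κ c1 c2 + (σ : Set ℤ) ⊆ κ c1 c2)
    (hκ3 : ∀ c1 c2, κ c1 c2 ⊆ -(κ (!c2) (!c1)))
    (hκ4 : ∀ c1 c2, κ c1 c2 ⊆ -(κ c2 c1) + (σ : Set ℤ))
    (hξ2 : ∀ c1 c2, ξ c1 c2 + (σ : Set ℤ) ⊆ ξ c1 c2)
    (hξ3 : ∀ c1 c2, ξ c1 c2 ⊆ -(ξ (!c2) (!c1)))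
    (hξ4 : ∀ c1 c2, ξ c1 c2 ⊆ -(ξ c2 c1) + (σ : Set ℤ))
    (h5 : ∀ c1 c2, ξ c1 c2 ⊆ ξ c1 (!c2) ∪ (-(ξ c2 (!c1)) + (σ : Set ℤ)))
    (h6 : (0 : ℤ) ∈ κ true false ∩ κ false true)
    (h7 : ∀ c1 c2 c3, κ c1 c2 + κ (!c2) c3 ⊆ κ c1 c3)
    (h8 : ∀ c1 c2 c3, κ c1 c2 + ξ (!c2) c3 ⊆ ξ c1 c3) :
    κ true true = κ false false ∧ κ true false = κ false true ∧
    ξ true true = ξ false false ∧ ξ true true = ξ true false ∧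
    ξ true true = ξ false true ∧
    ∃ u m : ℤ, 0 ≤ u ∧ 1 ≤ m ∧
      ∃ D E : Set ℤ, D ⊆ {0} ∪ Set.Icc 1 (m / 2) ∧ E ⊆ {0} ∪ {x : ℤ | 0 < x} ∧
        (((σ : Set ℤ) = zMul (u * m) ∧ κ true true = zMul m ∧
            κ true false = zMul m ∧ ξ true true = (dmSet m D)ᶜ) ∨
         ((σ : Set ℤ) = zMul (2 * u * m) ∧ κ true true = zCoset m (2 * m) ∧
            κ true false = zMul (2 * m) ∧ ξ true true = (dmSet m D)ᶜ) ∨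
         ((σ : Set ℤ) = zMul (u * m) ∧ κ true true = ∅ ∧
            κ true false = zMul m ∧ ξ true true = (dmSet m D)ᶜ) ∨
         ((σ : Set ℤ) = {0} ∧ κ true true = {0} ∧
            κ true false = {0} ∧ ξ true true = (E ∪ -E)ᶜ) ∨
         ((σ : Set ℤ) = {0} ∧ κ true true = ∅ ∧
            κ true false = {0} ∧ ξ true true = (E ∪ -E)ᶜ)) := by
  have hκ : SymmetricFamily (σ : Set ℤ) κ := ⟨hκ2, hκ3, hκ4⟩
  have hξ : SymmetricFamily (σ : Set ℤ) ξ := ⟨hξ2, hξ3, hξ4⟩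
  have hξtf : ξ true false = ξ true true := hξ.not_right_eq h5 true true
  have hξft : ξ false true = ξ true true := (hξ.swap_eq true false).trans hξtf
  have hκff : κ false false = κ true true := hκ.not_not_eq true true
  let K : AddSubgroup ℤ :=
    { carrier := κ true false
      add_mem' := fun ha hb => h7 true false false (Set.add_mem_add ha hb)
      zero_mem' := h6.1
      neg_mem' := fun ha => hκ.neg_subset true false (Set.neg_mem_neg.mpr ha) }
  have hσK : σ ≤ K := fun s hs => show s ∈ κ true false by
    simpa using hκ2 true false (Set.add_mem_add h6.1 hs)
  refine ⟨hκff.symm, (hκ.swap_eq true false).symm, (hξ.not_not_eq true true).symm, hξtf.symm,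
    hξft.symm, exists_normal_form σ K (κ true true) (ξ true true) hσK (h7 true false true)
      (hκff ▸ h7 true true false) (h8 true false true) (hξft ▸ h8 true true true)
      (hξ.neg_subset _ _)⟩
end
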